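/- With the fusion axioms as above, for fusion-closed sets g and h, define g ⊔' h = { p | ∃ α ∈ g, ∃ β ∈ h, N α β p > 0 }. Then g ⊔' h is fusion-closed, contains both g and h, and is contained in every fusion-closed set containing both g and h; that is, g ⊔' h is the join of g and h in the lattice of fusion-closed sets. -/

import Mathlib

/-!
Write `r ∈ p ⋆ q` for `0 < N p q r`. Since the coefficients are natural numbers, associativity of
`N` says exactly that `r ∈ (p ⋆ q) ⋆ s` iff `r ∈ p ⋆ (q ⋆ s)` as relations. A product of two
elements of `g ⋆ h` can therefore be regrouped, using commutativity once, into `(g ⋆ g) ⋆ (h ⋆ h)`,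
which lies in `g ⋆ h` because `g` and `h` are fusion-closed.
-/

/-- A subset of primaries is fusion-closed if it contains the vacuum and is
closed under the fusion product. -/
def FusionClosed {X : Type*} (N : X → X → X → ℕ) (v : X) (g : Set X) : Prop :=
  v ∈ g ∧ ∀ p ∈ g, ∀ q ∈ g, ∀ r, 0 < N p q r → r ∈ g

def fusionJoin {X : Type*} (N : X → X → X → ℕ) (g h : Set X) : Set X :=
  {p | ∃ α ∈ g, ∃ β ∈ h, 0 < N α β p}

section

variable {X : Type*} {N : X → X → X → ℕ} {v : X} {g h : Set X}

theorem exists_fusion_pos_iff_of_assoc [Fintype X]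
    (hassoc : ∀ p q r s, (∑ t, N p q t * N t r s) = ∑ t, N q r t * N p t s) (p q r s : X) :
    (∃ t, 0 < N p q t ∧ 0 < N t r s) ↔ ∃ t, 0 < N q r t ∧ 0 < N p t s := by
  simpa [Finset.sum_pos_iff, CanonicallyOrderedAdd.mul_pos] using
    (congrArg (0 < ·) (hassoc p q r s)).to_iff

theorem fusion_vacuum_left_pos [DecidableEq X] (hunit : ∀ p q, N v p q = if p = q then 1 else 0)
    (p : X) : 0 < N v p p := by
  simp [hunit]

theorem subset_fusionJoin_left [DecidableEq X]
    (hunit : ∀ p q, N v p q = if p = q then 1 else 0) (hcomm : ∀ p q r, N p q r = N q p r)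
    (hv : v ∈ h) : g ⊆ fusionJoin N g h :=
  fun p hp => ⟨p, hp, v, hv, hcomm p v p ▸ fusion_vacuum_left_pos hunit p⟩

theorem subset_fusionJoin_right [DecidableEq X]
    (hunit : ∀ p q, N v p q = if p = q then 1 else 0) (hv : v ∈ g) : h ⊆ fusionJoin N g h :=
  fun p hp => ⟨v, hv, p, hp, fusion_vacuum_left_pos hunit p⟩

theorem FusionClosed.fusionJoin_subset {k : Set X} (hk : FusionClosed N v k) (hgk : g ⊆ k)
    (hhk : h ⊆ k) : fusionJoin N g h ⊆ k := by
  rintro p ⟨α, hα, β, hβ, hp⟩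
  exact hk.2 α (hgk hα) β (hhk hβ) p hp

theorem fusionClosed_fusionJoin [Fintype X] [DecidableEq X]
    (hunit : ∀ p q, N v p q = if p = q then 1 else 0) (hcomm : ∀ p q r, N p q r = N q p r)
    (hassoc : ∀ p q r s, (∑ t, N p q t * N t r s) = ∑ t, N q r t * N p t s)
    (hg : FusionClosed N v g) (hh : FusionClosed N v h) : FusionClosed N v (fusionJoin N g h) := by
  refine ⟨subset_fusionJoin_left hunit hcomm hh.1 hg.1, ?_⟩
  rintro p ⟨α, hα, β, hβ, hp⟩ q ⟨γ, hγ, δ, hδ, hq⟩ r hr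
  -- `r ∈ p ⋆ (γ ⋆ δ) = (p ⋆ γ) ⋆ δ` and `p ⋆ γ ⊆ γ ⋆ (α ⋆ β) = (γ ⋆ α) ⋆ β`
  obtain ⟨t, hpγt, htδr⟩ := (exists_fusion_pos_iff_of_assoc hassoc p γ δ r).2 ⟨q, hq, hr⟩
  obtain ⟨u, hγαu, huβt⟩ :=
    (exists_fusion_pos_iff_of_assoc hassoc γ α β t).2 ⟨p, hp, hcomm p γ t ▸ hpγt⟩
  obtain ⟨w, hβδw, huwr⟩ := (exists_fusion_pos_iff_of_assoc hassoc u β δ r).1 ⟨t, huβt, htδr⟩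
  exact ⟨u, hg.2 γ hγ α hα u hγαu, w, hh.2 β hβ δ hδ w hβδw, huwr⟩

end

theorem fusion_join_characterization
    (X : Type*) [Fintype X] [DecidableEq X] (N : X → X → X → ℕ) (v : X)
    (hunit : ∀ p q, N v p q = if p = q then 1 else 0)
    (hcomm : ∀ p q r, N p q r = N q p r)
    (hassoc : ∀ p q r s,
      (∑ t, N p q t * N t r s) = ∑ t, N q r t * N p t s)
    (g h : Set X) (hg : FusionClosed N v g) (hh : FusionClosed N v h) :
    FusionClosed N v {p | ∃ α ∈ g, ∃ β ∈ h, 0 < N α β p} ∧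
    g ⊆ {p | ∃ α ∈ g, ∃ β ∈ h, 0 < N α β p} ∧
    h ⊆ {p | ∃ α ∈ g, ∃ β ∈ h, 0 < N α β p} ∧
    ∀ k : Set X, FusionClosed N v k → g ⊆ k → h ⊆ k →
      {p | ∃ α ∈ g, ∃ β ∈ h, 0 < N α β p} ⊆ k :=
  ⟨fusionClosed_fusionJoin hunit hcomm hassoc hg hh, subset_fusionJoin_left hunit hcomm hh.1,
    subset_fusionJoin_right hunit hg.1, fun _ hk => hk.fusionJoin_subset⟩
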